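/- arXiv:1702.02658 — 4 statements merged into one kernel-verified Lean document; each statement's English description precedes it below -/
import Mathlib

section
/- Self-consistency of Gabriel cross-validation (Proposition 1). Suppose there are K ≥ 1 true centers μ(1), …, μ(K) ∈ ℝ^p × ℝ^q, written μ(g) = (μ^X(g), μ^Y(g)), and a map G : {1,…,n+m} → {1,…,K} such that: (i) X_i = μ^X(G_i) and Y_i = μ^Y(G_i) for all i = 1,…,n+m (no noise); (ii) μ^X(1), …, μ^X(K) are pairwise distinct; (iii) μ^Y(1), …, μ^Y(K) are pairwise distinct; (iv) every label in {1,…,K} is attained by G on the training indices {1,…,n}; (v) every label in {1,…,K} is attained by G on the test indices {n+1,…,n+m}. Then for every integer k ≥ 1 and for every choice of k-means solution, class means, and classifier as in the pipeline, the resulting cross-validation error satisfies CV(k) > 0 whenever k < K, and CV(k) = 0 whenever k ≥ K; in particular K is the smallest minimizer of k ↦ CV(k). -/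
open scoped BigOperators

noncomputable section

namespace GabrielCV

/-- Within-cluster dispersion of the training responses `Ytr` with respect to a
finite nonempty set `A` of centers:  `W(A) = Σ_i min_{a ∈ A} ‖Y_i − a‖²`. -/
def W {q n : ℕ} (Ytr : Fin n → EuclideanSpace ℝ (Fin q))
    (A : Finset (EuclideanSpace ℝ (Fin q))) (hA : A.Nonempty) : ℝ :=
  ∑ i, A.inf' hA fun a => ‖Ytr i - a‖ ^ 2

open Classical in
/-- The class of the center `a` under the assignment `GY`. -/
def cls {q n : ℕ} (GY : Fin n → EuclideanSpace ℝ (Fin q))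
    (a : EuclideanSpace ℝ (Fin q)) : Finset (Fin n) :=
  Finset.univ.filter fun i => GY i = a

/-- The class mean `μ̄^X(a)`: the average of the training predictors over the class of `a`. -/
def classMean {p q n : ℕ} (Xtr : Fin n → EuclideanSpace ℝ (Fin p))
    (GY : Fin n → EuclideanSpace ℝ (Fin q)) (a : EuclideanSpace ℝ (Fin q)) :
    EuclideanSpace ℝ (Fin p) :=
  ((cls GY a).card : ℝ)⁻¹ • ∑ i ∈ cls GY a, Xtr i

/-- `IsCV Xtr Ytr Xte Yte k cv` holds when `cv` is the cross-validation error of one fold of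
the Gabriel cross-validation pipeline run with (at most) `k` clusters, for some choice of
`k`-means solution `(A, GY)` (a set of at most `k` centers minimizing the within-cluster
dispersion, together with a nearest-center assignment of the training rows) and some nearest
class-mean classifier `GX`. -/
def IsCV {p q n m : ℕ} (Xtr : Fin n → EuclideanSpace ℝ (Fin p))
    (Ytr : Fin n → EuclideanSpace ℝ (Fin q))
    (Xte : Fin m → EuclideanSpace ℝ (Fin p))
    (Yte : Fin m → EuclideanSpace ℝ (Fin q))
    (k : ℕ) (cv : ℝ) : Prop :=
  ∃ (A : Finset (EuclideanSpace ℝ (Fin q))) (hA : A.Nonempty)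
    (GY : Fin n → EuclideanSpace ℝ (Fin q))
    (GX : EuclideanSpace ℝ (Fin p) → EuclideanSpace ℝ (Fin q)),
      A.card ≤ k ∧
      (∀ (B : Finset (EuclideanSpace ℝ (Fin q))) (hB : B.Nonempty),
          B.card ≤ k → W Ytr A hA ≤ W Ytr B hB) ∧
      (∀ i, GY i ∈ A) ∧
      (∀ i, ‖Ytr i - GY i‖ = A.inf' hA fun a => ‖Ytr i - a‖) ∧
      (∀ x, GX x ∈ A ∧ (cls GY (GX x)).Nonempty ∧
        ∀ a ∈ A, (cls GY a).Nonempty →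
          ‖x - classMean Xtr GY (GX x)‖ ≤ ‖x - classMean Xtr GY a‖) ∧
      cv = (m : ℝ)⁻¹ * ∑ j, ‖Yte j - GX (Xte j)‖ ^ 2

/-- **Self-consistency of Gabriel cross-validation (Proposition 1).**
In the absence of noise, with distinct cluster centers and both the training and test sets
containing every cluster, the cross-validation error satisfies `CV(k) > 0` for `k < K` and
`CV(k) = 0` for `k ≥ K`; in particular `K` is the smallest minimizer of `k ↦ CV(k)`. -/
theorem self_consistency {p q n m K : ℕ}
    (hp : 1 ≤ p) (hq : 1 ≤ q) (hn : 1 ≤ n) (hm : 1 ≤ m) (hK : 1 ≤ K)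
    (X : Fin (n + m) → EuclideanSpace ℝ (Fin p))
    (Y : Fin (n + m) → EuclideanSpace ℝ (Fin q))
    (μX : Fin K → EuclideanSpace ℝ (Fin p))
    (μY : Fin K → EuclideanSpace ℝ (Fin q))
    (G : Fin (n + m) → Fin K)
    -- (i) no noise
    (hX : ∀ i, X i = μX (G i)) (hY : ∀ i, Y i = μY (G i))
    -- (ii) the μ^X(g) are pairwise distinct
    (hμX : Function.Injective μX)
    -- (iii) the μ^Y(g) are pairwise distinct
    (hμY : Function.Injective μY)
    -- (iv) the training set contains at least one member of each cluster
    (htrain : ∀ g : Fin K, ∃ i : Fin n, G (Fin.castAdd m i) = g)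
    -- (v) the test set contains at least one member of each cluster
    (htest : ∀ g : Fin K, ∃ j : Fin m, G (Fin.natAdd n j) = g) :
    (∀ k cv, 1 ≤ k →
        IsCV (fun i => X (Fin.castAdd m i)) (fun i => Y (Fin.castAdd m i))
          (fun j => X (Fin.natAdd n j)) (fun j => Y (Fin.natAdd n j)) k cv →
        (k < K → 0 < cv) ∧ (K ≤ k → cv = 0)) ∧
    -- in particular, `K` is the smallest minimizer of `k ↦ CV(k)`
    (∀ CV : ℕ → ℝ,
        (∀ k, 1 ≤ k →
          IsCV (fun i => X (Fin.castAdd m i)) (fun i => Y (Fin.castAdd m i))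
            (fun j => X (Fin.natAdd n j)) (fun j => Y (Fin.natAdd n j)) k (CV k)) →
        (∀ k, 1 ≤ k → CV K ≤ CV k) ∧ (∀ k, 1 ≤ k → CV k ≤ CV K → K ≤ k)) := by
  classical
  have hm0 : (0:ℝ) < m := by exact_mod_cast hm
  have hKne : Nonempty (Fin K) := ⟨⟨0, hK⟩⟩
  -- nonnegativity of any CV value
  have cvnonneg : ∀ k cv,
      IsCV (fun i => X (Fin.castAdd m i)) (fun i => Y (Fin.castAdd m i))
        (fun j => X (Fin.natAdd n j)) (fun j => Y (Fin.natAdd n j)) k cv → 0 ≤ cv := by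
    intro k cv hcv
    obtain ⟨A, hA, GY, GX, hcard, hmin, hGYmem, hGYnear, hGX, hcveq⟩ := hcv
    rw [hcveq]
    have h1 : 0 ≤ ∑ j, ‖Y (Fin.natAdd n j) - GX (X (Fin.natAdd n j))‖ ^ 2 :=
      Finset.sum_nonneg fun j _ => by positivity
    positivity
  have main : ∀ k cv, 1 ≤ k →
      IsCV (fun i => X (Fin.castAdd m i)) (fun i => Y (Fin.castAdd m i))
        (fun j => X (Fin.natAdd n j)) (fun j => Y (Fin.natAdd n j)) k cv →
      (k < K → 0 < cv) ∧ (K ≤ k → cv = 0) := by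
    intro k cv hk hcv
    have hnonneg := cvnonneg k cv hcv
    obtain ⟨A, hA, GY, GX, hcard, hmin, hGYmem, hGYnear, hGX, hcveq⟩ := hcv
    constructor
    · -- k < K : cv > 0
      intro hkK
      rcases lt_or_eq_of_le hnonneg with h | h
      · exact h
      exfalso
      -- cv = 0 forces all μY g ∈ A
      have hsum : ∑ j, ‖Y (Fin.natAdd n j) - GX (X (Fin.natAdd n j))‖ ^ 2 = 0 := by
        have h' : (m : ℝ)⁻¹ * ∑ j, ‖Y (Fin.natAdd n j) - GX (X (Fin.natAdd n j))‖ ^ 2 = 0 := by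
          rw [← hcveq, ← h]
        rcases mul_eq_zero.mp h' with h'' | h''
        · exact absurd h'' (by positivity)
        · exact h''
      have hterm : ∀ j : Fin m, Y (Fin.natAdd n j) = GX (X (Fin.natAdd n j)) := by
        intro j
        have := (Finset.sum_eq_zero_iff_of_nonneg
          (fun j _ => by positivity)).mp hsum j (Finset.mem_univ j)
        have hnorm : ‖Y (Fin.natAdd n j) - GX (X (Fin.natAdd n j))‖ = 0 := by
          nlinarith [norm_nonneg (Y (Fin.natAdd n j) - GX (X (Fin.natAdd n j)))]
        rw [← sub_eq_zero]
        exact norm_eq_zero.mp hnorm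
      have hsub : Finset.image μY Finset.univ ⊆ A := by
        intro a ha
        simp only [Finset.mem_image, Finset.mem_univ, true_and] at ha
        obtain ⟨g, rfl⟩ := ha
        obtain ⟨j, hj⟩ := htest g
        have := hterm j
        rw [hY, hj] at this
        rw [this]
        exact (hGX (X (Fin.natAdd n j))).1
      have hKcard : K ≤ A.card := by
        calc K = (Finset.image μY Finset.univ).card := by
              rw [Finset.card_image_of_injective _ hμY, Finset.card_univ, Fintype.card_fin]
          _ ≤ A.card := Finset.card_le_card hsub
      omega
    · -- K ≤ k : cv = 0
      intro hKk
      -- Step 1: W A = 0 via the candidate B = image μY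
      set B := Finset.image μY Finset.univ with hBdef
      have hBne : B.Nonempty := ⟨μY ⟨0, hK⟩, Finset.mem_image_of_mem _ (Finset.mem_univ _)⟩
      have hBcard : B.card ≤ k := by
        rw [hBdef, Finset.card_image_of_injective _ hμY, Finset.card_univ, Fintype.card_fin]
        omega
      have hWB : W (fun i => Y (Fin.castAdd m i)) B hBne = 0 := by
        apply Finset.sum_eq_zero
        intro i _
        apply le_antisymm
        · have hmem : μY (G (Fin.castAdd m i)) ∈ B :=
            Finset.mem_image_of_mem _ (Finset.mem_univ _)
          have := Finset.inf'_le (f := fun a => ‖Y (Fin.castAdd m i) - a‖ ^ 2) hmem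
          exact le_of_le_of_eq this (by simp [hY])
        · exact Finset.le_inf' _ _ fun a _ => by positivity
      have hWA0 : W (fun i => Y (Fin.castAdd m i)) A hA = 0 := by
        apply le_antisymm
        · rw [← hWB]; exact hmin B hBne hBcard
        · exact Finset.sum_nonneg fun i _ =>
            Finset.le_inf' _ _ fun a _ => by positivity
      -- Step 2: each training row's assigned center is exactly its response
      have hGYeq : ∀ i : Fin n, GY i = Y (Fin.castAdd m i) := by
        intro i
        have hterm : A.inf' hA (fun a => ‖Y (Fin.castAdd m i) - a‖ ^ 2) = 0 := by
          have := (Finset.sum_eq_zero_iff_of_nonneg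
            (fun i _ => Finset.le_inf' _ _ fun a _ => by positivity)).mp hWA0 i
            (Finset.mem_univ i)
          exact this
        obtain ⟨a, haA, hae⟩ := Finset.exists_mem_eq_inf' hA
          (fun a => ‖Y (Fin.castAdd m i) - a‖ ^ 2)
        have ha0 : ‖Y (Fin.castAdd m i) - a‖ = 0 := by
          have : ‖Y (Fin.castAdd m i) - a‖ ^ 2 = 0 := by rw [← hae, hterm]
          nlinarith [norm_nonneg (Y (Fin.castAdd m i) - a)]
        have h1 : ‖Y (Fin.castAdd m i) - GY i‖ ≤ 0 := by
          rw [hGYnear i]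
          calc A.inf' hA (fun a => ‖Y (Fin.castAdd m i) - a‖)
              ≤ ‖Y (Fin.castAdd m i) - a‖ := Finset.inf'_le _ haA
            _ = 0 := ha0
        have h2 : ‖Y (Fin.castAdd m i) - GY i‖ = 0 :=
          le_antisymm h1 (norm_nonneg _)
        have := norm_eq_zero.mp h2
        rw [sub_eq_zero] at this
        exact this.symm
      -- the class of μY g is exactly the training rows with label g
      have hclsg : ∀ g : Fin K, cls GY (μY g)
          = Finset.univ.filter (fun i => G (Fin.castAdd m i) = g) := by
        intro g
        ext i
        simp only [cls, Finset.mem_filter, Finset.mem_univ, true_and]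
        rw [hGYeq i, hY]
        exact ⟨fun h => hμY h, fun h => by rw [h]⟩
      have hclsne : ∀ g : Fin K, (cls GY (μY g)).Nonempty := by
        intro g
        obtain ⟨i, hi⟩ := htrain g
        exact ⟨i, by rw [hclsg]; simp [hi]⟩
      -- class means are the true X-centers
      have hmean : ∀ g : Fin K,
          classMean (fun i => X (Fin.castAdd m i)) GY (μY g) = μX g := by
        intro g
        have hsum : ∑ i ∈ cls GY (μY g), X (Fin.castAdd m i)
            = (cls GY (μY g)).card • μX g := by
          rw [Finset.sum_congr rfl (fun i hi => ?_), Finset.sum_const]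
          rw [hclsg] at hi
          simp only [Finset.mem_filter, Finset.mem_univ, true_and] at hi
          rw [hX, hi]
        have hcardne : ((cls GY (μY g)).card : ℝ) ≠ 0 := by
          exact_mod_cast Finset.card_ne_zero_of_mem (hclsne g).choose_spec
        rw [classMean, hsum, ← Nat.cast_smul_eq_nsmul ℝ, smul_smul,
          inv_mul_cancel₀ hcardne, one_smul]
      -- every true Y-center is in A
      have hAmemμ : ∀ g : Fin K, μY g ∈ A := by
        intro g
        obtain ⟨i, hi⟩ := htrain g
        have := hGYmem i
        rw [hGYeq i, hY, hi] at this
        exact this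
      -- the classifier recovers the true label on test points
      have hGXval : ∀ j : Fin m, GX (X (Fin.natAdd n j)) = μY (G (Fin.natAdd n j)) := by
        intro j
        set x := X (Fin.natAdd n j) with hxdef
        set g := G (Fin.natAdd n j) with hgdef
        obtain ⟨hmemA, hclsNE, hminGX⟩ := hGX x
        obtain ⟨i, hi⟩ := hclsNE
        simp only [cls, Finset.mem_filter, Finset.mem_univ, true_and] at hi
        have hGXform : GX x = μY (G (Fin.castAdd m i)) := by
          rw [← hi, hGYeq i, hY]
        set g₁ := G (Fin.castAdd m i) with hg1def
        have h1 := hminGX (μY g) (hAmemμ g) (hclsne g)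
        rw [hGXform, hmean g₁, hmean g] at h1
        have hx : x = μX g := by rw [hxdef, hX]
        rw [hx] at h1
        simp only [sub_self, norm_zero] at h1
        have h2 : ‖μX g - μX g₁‖ = 0 := le_antisymm h1 (norm_nonneg _)
        have h3 : μX g = μX g₁ := by
          have := norm_eq_zero.mp h2
          rwa [sub_eq_zero] at this
        have h4 : g = g₁ := hμX h3
        rw [hGXform, ← h4]
      -- conclude cv = 0
      rw [hcveq]
      have : ∑ j, ‖Y (Fin.natAdd n j) - GX (X (Fin.natAdd n j))‖ ^ 2 = 0 := by
        apply Finset.sum_eq_zero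
        intro j _
        rw [hGXval j, hY, sub_self, norm_zero]
        norm_num
      rw [this, mul_zero]
  refine ⟨main, ?_⟩
  intro CV hCV
  have hCVK : CV K = 0 := (main K (CV K) hK (hCV K hK)).2 le_rfl
  constructor
  · intro k hk
    rw [hCVK]
    exact cvnonneg k (CV k) (hCV k hk)
  · intro k hk hle
    by_contra h
    push_neg at h
    have := (main k (CV k) hk (hCV k hk)).1 h
    rw [hCVK] at hle
    linarith


end GabrielCV
end
end

section
/- Lemma 1 of the self-consistency proof. Suppose there are K ≥ 1 true centers μ(1), …, μ(K) ∈ ℝ^p × ℝ^q, written μ(g) = (μ^X(g), μ^Y(g)), and a map G : {1,…,n+m} → {1,…,K} such that: (i) X_i = μ^X(G_i) and Y_i = μ^Y(G_i) for all i = 1,…,n+m (no noise); (iii) μ^Y(1), …, μ^Y(K) are pairwise distinct; (v) every label in {1,…,K} is attained by G on the test indices {n+1,…,n+m}. If k < K, then for every choice of k-means solution, class means, and classifier as in the pipeline, CV(k) > 0. -/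
open scoped BigOperators

noncomputable section

namespace GabrielCV

/-- **Lemma 1 of the self-consistency proof.**
In the absence of noise, with distinct response centers `μ^Y(g)` and a test set containing
every cluster, if `k < K` then every run of the Gabriel cross-validation pipeline with `k`
clusters has strictly positive cross-validation error. -/
theorem lemma1 {p q n m K : ℕ}
    (hp : 1 ≤ p) (hq : 1 ≤ q) (hn : 1 ≤ n) (hm : 1 ≤ m) (hK : 1 ≤ K)
    (X : Fin (n + m) → EuclideanSpace ℝ (Fin p))
    (Y : Fin (n + m) → EuclideanSpace ℝ (Fin q))
    (μX : Fin K → EuclideanSpace ℝ (Fin p))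
    (μY : Fin K → EuclideanSpace ℝ (Fin q))
    (G : Fin (n + m) → Fin K)
    -- (i) no noise
    (hX : ∀ i, X i = μX (G i)) (hY : ∀ i, Y i = μY (G i))
    -- (iii) the μ^Y(g) are pairwise distinct
    (hμY : Function.Injective μY)
    -- (v) the test set contains at least one member of each cluster
    (htest : ∀ g : Fin K, ∃ j : Fin m, G (Fin.natAdd n j) = g)
    (k : ℕ) (hk : 1 ≤ k) (hkK : k < K) (cv : ℝ)
    (hcv : IsCV (fun i => X (Fin.castAdd m i)) (fun i => Y (Fin.castAdd m i))
        (fun j => X (Fin.natAdd n j)) (fun j => Y (Fin.natAdd n j)) k cv) :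
    0 < cv := by
  classical
  obtain ⟨A, hA, GY, GX, hAcard, _, _, _, hGX, hcveq⟩ := hcv
  set S := ∑ j : Fin m, ‖Y (Fin.natAdd n j) - GX (X (Fin.natAdd n j))‖ ^ 2 with hS
  have hSnonneg : 0 ≤ S := Finset.sum_nonneg fun j _ => by positivity
  have hSne : S ≠ 0 := by
    intro h0
    have hterm := (Finset.sum_eq_zero_iff_of_nonneg
      (fun (j : Fin m) _ => by positivity : ∀ j ∈ Finset.univ,
        (0:ℝ) ≤ ‖Y (Fin.natAdd n j) - GX (X (Fin.natAdd n j))‖ ^ 2)).mp h0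
    have heq : ∀ j : Fin m, Y (Fin.natAdd n j) = GX (X (Fin.natAdd n j)) := by
      intro j
      have h1 := hterm j (Finset.mem_univ j)
      have h2 : ‖Y (Fin.natAdd n j) - GX (X (Fin.natAdd n j))‖ = 0 := by
        nlinarith [norm_nonneg (Y (Fin.natAdd n j) - GX (X (Fin.natAdd n j)))]
      exact sub_eq_zero.mp (norm_eq_zero.mp h2)
    have himg : ∀ g : Fin K, μY g ∈ A := by
      intro g
      obtain ⟨j, hj⟩ := htest g
      have := heq j
      rw [hY (Fin.natAdd n j), hj] at this
      rw [this]
      exact (hGX (X (Fin.natAdd n j))).1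
    have hcard : K ≤ A.card := by
      have hsub : Finset.univ.image μY ⊆ A := by
        intro a ha
        obtain ⟨g, _, rfl⟩ := Finset.mem_image.mp ha
        exact himg g
      calc K = (Finset.univ.image μY).card := by
              rw [Finset.card_image_of_injective _ hμY, Finset.card_univ, Fintype.card_fin]
        _ ≤ A.card := Finset.card_le_card hsub
    omega
  have hSpos : 0 < S := lt_of_le_of_ne hSnonneg (Ne.symm hSne)
  have hm' : (0:ℝ) < (m : ℝ)⁻¹ := by
    have : (0:ℝ) < m := by exact_mod_cast hm
    positivity
  rw [hcveq]
  exact mul_pos hm' hSpos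

end GabrielCV
end
end

section
/- Lemma 2 of the self-consistency proof. Suppose there are K ≥ 1 true centers μ(1), …, μ(K) ∈ ℝ^p × ℝ^q, written μ(g) = (μ^X(g), μ^Y(g)), and a map G : {1,…,n+m} → {1,…,K} such that: (i) X_i = μ^X(G_i) and Y_i = μ^Y(G_i) for all i = 1,…,n+m (no noise); (ii) μ^X(1), …, μ^X(K) are pairwise distinct; (iii) μ^Y(1), …, μ^Y(K) are pairwise distinct; (iv) every label in {1,…,K} is attained by G on the training indices {1,…,n}. If k ≥ K, then for every choice of k-means solution, class means, and classifier as in the pipeline, CV(k) = 0. -/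
open scoped BigOperators

noncomputable section

namespace GabrielCV

/-- **Lemma 2 of the self-consistency proof.**
In the absence of noise, with distinct predictor centers `μ^X(g)`, distinct response centers
`μ^Y(g)`, and a training set containing every cluster, if `k ≥ K` then every run of the
Gabriel cross-validation pipeline with `k` clusters has zero cross-validation error. -/
theorem lemma2 {p q n m K : ℕ}
    (hp : 1 ≤ p) (hq : 1 ≤ q) (hn : 1 ≤ n) (hm : 1 ≤ m) (hK : 1 ≤ K)
    (X : Fin (n + m) → EuclideanSpace ℝ (Fin p))
    (Y : Fin (n + m) → EuclideanSpace ℝ (Fin q))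
    (μX : Fin K → EuclideanSpace ℝ (Fin p))
    (μY : Fin K → EuclideanSpace ℝ (Fin q))
    (G : Fin (n + m) → Fin K)
    -- (i) no noise
    (hX : ∀ i, X i = μX (G i)) (hY : ∀ i, Y i = μY (G i))
    -- (ii) the μ^X(g) are pairwise distinct
    (hμX : Function.Injective μX)
    -- (iii) the μ^Y(g) are pairwise distinct
    (hμY : Function.Injective μY)
    -- (iv) the training set contains at least one member of each cluster
    (htrain : ∀ g : Fin K, ∃ i : Fin n, G (Fin.castAdd m i) = g)
    (k : ℕ) (hk : 1 ≤ k) (hkK : K ≤ k) (cv : ℝ)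
    (hcv : IsCV (fun i => X (Fin.castAdd m i)) (fun i => Y (Fin.castAdd m i))
        (fun j => X (Fin.natAdd n j)) (fun j => Y (Fin.natAdd n j)) k cv) :
    cv = 0 := by
  classical
  obtain ⟨A, hA, GY, GX, hcard, hmin, hmem, hnear, hGX, hcveq⟩ := hcv
  set Xtr : Fin n → EuclideanSpace ℝ (Fin p) := fun i => X (Fin.castAdd m i) with hXtr
  set Ytr : Fin n → EuclideanSpace ℝ (Fin q) := fun i => Y (Fin.castAdd m i) with hYtrdef
  set Xte : Fin m → EuclideanSpace ℝ (Fin p) := fun j => X (Fin.natAdd n j) with hXte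
  set Yte : Fin m → EuclideanSpace ℝ (Fin q) := fun j => Y (Fin.natAdd n j) with hYte
  have hYtr : ∀ i, Ytr i = μY (G (Fin.castAdd m i)) := fun i => hY _
  -- the candidate center set consisting of the true response centers
  set B : Finset (EuclideanSpace ℝ (Fin q)) := Finset.univ.image μY with hB
  have hBne : B.Nonempty := by
    refine ⟨μY ⟨0, hK⟩, ?_⟩
    simp [hB]
  have hBcard : B.card ≤ k := by
    refine le_trans (le_trans Finset.card_image_le ?_) hkK
    simp
  have hWB : W Ytr B hBne = 0 := by
    refine Finset.sum_eq_zero fun i _ => ?_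
    refine le_antisymm ?_ ?_
    · rw [hYtr i]
      have hmemB : μY (G (Fin.castAdd m i)) ∈ B := by simp [hB]
      have h := Finset.inf'_le (fun a => ‖μY (G (Fin.castAdd m i)) - a‖ ^ 2) hmemB
      exact le_of_le_of_eq h (by simp)
    · exact Finset.le_inf' _ _ fun a _ => by positivity
  have hWA0 : W Ytr A hA = 0 := by
    refine le_antisymm (by rw [← hWB]; exact hmin B hBne hBcard) ?_
    exact Finset.sum_nonneg fun i _ =>
      Finset.le_inf' _ _ fun a _ => by positivity
  have hnonneg : ∀ i ∈ (Finset.univ : Finset (Fin n)),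
      (0:ℝ) ≤ A.inf' hA fun a => ‖Ytr i - a‖ ^ 2 :=
    fun i _ => Finset.le_inf' hA _ fun a _ => pow_nonneg (norm_nonneg _) 2
  have hterm : ∀ i : Fin n, (A.inf' hA fun a => ‖Ytr i - a‖ ^ 2) = 0 := fun i =>
    (Finset.sum_eq_zero_iff_of_nonneg hnonneg).mp hWA0 i (Finset.mem_univ i)
  -- the assignment sends each training row to its own response value
  have hGYeq : ∀ i : Fin n, GY i = Ytr i := by
    intro i
    obtain ⟨a, haA, hav⟩ := Finset.exists_mem_eq_inf' hA (fun a => ‖Ytr i - a‖ ^ 2)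
    have ha0 : ‖Ytr i - a‖ = 0 := by
      have : ‖Ytr i - a‖ ^ 2 = 0 := by rw [← hav]; exact hterm i
      exact pow_eq_zero_iff (by norm_num) |>.mp this
    have h1 : ‖Ytr i - GY i‖ ≤ 0 := by
      rw [hnear i]
      exact le_trans (Finset.inf'_le _ haA) (le_of_eq ha0)
    have : Ytr i - GY i = 0 := norm_le_zero_iff.mp h1
    exact (sub_eq_zero.mp this).symm
  have hGYμ : ∀ i : Fin n, GY i = μY (G (Fin.castAdd m i)) := fun i =>
    (hGYeq i).trans (hYtr i)
  -- class membership in the class of a true center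
  have hcls : ∀ (g : Fin K) (i : Fin n),
      i ∈ cls GY (μY g) ↔ G (Fin.castAdd m i) = g := by
    intro g i
    simp only [cls, Finset.mem_filter, Finset.mem_univ, true_and, hGYμ i]
    exact hμY.eq_iff
  have hclsne : ∀ g : Fin K, (cls GY (μY g)).Nonempty := by
    intro g
    obtain ⟨i, hi⟩ := htrain g
    exact ⟨i, (hcls g i).mpr hi⟩
  have hμYA : ∀ g : Fin K, μY g ∈ A := by
    intro g
    obtain ⟨i, hi⟩ := htrain g
    have := hmem i
    rwa [hGYμ i, hi] at this
  -- class means are the true predictor centers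
  have hcm : ∀ g : Fin K, classMean Xtr GY (μY g) = μX g := by
    intro g
    have hsum : ∑ i ∈ cls GY (μY g), Xtr i
        = ((cls GY (μY g)).card : ℝ) • μX g := by
      rw [Finset.sum_congr rfl (fun i hi => ?_), Finset.sum_const,
        Nat.cast_smul_eq_nsmul]
      show Xtr i = μX g
      rw [hXtr]
      simp only [hX]
      rw [(hcls g i).mp hi]
    rw [classMean, hsum, smul_smul, inv_mul_cancel₀, one_smul]
    exact_mod_cast Finset.card_ne_zero.mpr (hclsne g)
  -- every test prediction equals the true response center
  have hpred : ∀ j : Fin m, GX (Xte j) = Yte j := by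
    intro j
    obtain ⟨hGXA, hGXne, hGXmin⟩ := hGX (Xte j)
    set g : Fin K := G (Fin.natAdd n j) with hg
    have hx : Xte j = μX g := hX _
    have h1 : ‖Xte j - classMean Xtr GY (GX (Xte j))‖ ≤ 0 := by
      have h2 := hGXmin (μY g) (hμYA g) (hclsne g)
      rw [hcm g] at h2
      calc ‖Xte j - classMean Xtr GY (GX (Xte j))‖ ≤ ‖Xte j - μX g‖ := h2
        _ = 0 := by rw [hx, sub_self, norm_zero]
    have hcmeq : classMean Xtr GY (GX (Xte j)) = Xte j :=
      (sub_eq_zero.mp (norm_le_zero_iff.mp h1)).symm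
    obtain ⟨i, hi⟩ := hGXne
    have hia : GY i = GX (Xte j) := by
      simpa [cls] using hi
    have hGXform : GX (Xte j) = μY (G (Fin.castAdd m i)) := by
      rw [← hia, hGYμ i]
    have : μX (G (Fin.castAdd m i)) = μX g := by
      have := hcmeq
      rw [hGXform, hcm] at this
      rw [this, hx]
    have hgg : G (Fin.castAdd m i) = g := hμX this
    rw [hGXform, hgg, hYte]
    exact (hY _).symm
  rw [hcveq]
  rw [Finset.sum_eq_zero fun j _ => by rw [hpred j, sub_self, norm_zero]; norm_num]
  ring

end GabrielCV
end
end

section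
/- Expected two-cluster cross-validation error for a planar Gaussian mixture. For all real μX, μY, a, ∫∫_{ℝ²} [ (y − a)² 1{x > 0} + (y + a)² 1{x < 0} ] f(x, y) dx dy = 1 + μY² + a ( a + 2 μY − 4 μY Φ(μX) ). -/
open MeasureTheory

noncomputable section

/-- The standard normal density `φ(z) = (2π)^{−1/2} exp(−z²/2)`. -/
def phi (z : ℝ) : ℝ := (Real.sqrt (2 * Real.pi))⁻¹ * Real.exp (-z ^ 2 / 2)

/-- The standard normal cumulative distribution function `Φ(x) = ∫_{−∞}^x φ(z) dz`. -/
def Phi (x : ℝ) : ℝ := ∫ z in Set.Iic x, phi z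

/-- The joint density on `ℝ²` of an equiprobable mixture of two bivariate normal
distributions with identity covariance and means `(μX, μY)` and `(−μX, −μY)`. -/
def fmix2 (μX μY : ℝ) (p : ℝ × ℝ) : ℝ :=
  (1 / 2) * phi (p.1 - μX) * phi (p.2 - μY) + (1 / 2) * phi (p.1 + μX) * phi (p.2 + μY)

open Set Filter Real Topology

lemma phi_eq (z : ℝ) : phi z = (Real.sqrt (2 * Real.pi))⁻¹ * Real.exp (-(1/2) * z ^ 2) := by
  unfold phi
  rw [show -z ^ 2 / 2 = -(1/2) * z ^ 2 by ring]

lemma sqrt_two_pi_pos : 0 < Real.sqrt (2 * Real.pi) := Real.sqrt_pos.2 (by positivity)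

lemma phi_neg_arg (z : ℝ) : phi (-z) = phi z := by unfold phi; rw [neg_pow]; norm_num

lemma integrable_phi : Integrable phi := by
  have h := (integrable_exp_neg_mul_sq (by norm_num : (0:ℝ) < 1/2)).const_mul
    (Real.sqrt (2 * Real.pi))⁻¹
  exact h.congr (Eventually.of_forall fun z => (phi_eq z).symm)

lemma integrable_id_mul_phi : Integrable fun z : ℝ => z * phi z := by
  have h := (integrable_mul_exp_neg_mul_sq (by norm_num : (0:ℝ) < 1/2)).const_mul
    (Real.sqrt (2 * Real.pi))⁻¹
  refine h.congr (Eventually.of_forall fun z => ?_)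
  simp only [phi_eq]; ring

lemma integrable_sq_mul_exp : Integrable fun z : ℝ => z ^ 2 * Real.exp (-(1/2) * z ^ 2) := by
  have h := integrable_rpow_mul_exp_neg_mul_sq (by norm_num : (0:ℝ) < 1/2)
    (by norm_num : (-1:ℝ) < 2)
  refine h.congr (Eventually.of_forall fun z => ?_)
  simp only [Real.rpow_two]

lemma integrable_sq_mul_phi : Integrable fun z : ℝ => z ^ 2 * phi z := by
  have h := integrable_sq_mul_exp.const_mul (Real.sqrt (2 * Real.pi))⁻¹
  refine h.congr (Eventually.of_forall fun z => ?_)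
  simp only [phi_eq]; ring

lemma integrable_poly_phi (c μ : ℝ) : Integrable fun z : ℝ => (z + c) ^ 2 * phi (z + μ) := by
  have hbase : Integrable fun u : ℝ => (u + (c - μ)) ^ 2 * phi u := by
    have h := (integrable_sq_mul_phi.add
        (integrable_id_mul_phi.const_mul (2 * (c - μ)))).add
        (integrable_phi.const_mul ((c - μ) ^ 2))
    refine h.congr (Eventually.of_forall fun u => ?_)
    simp only [Pi.add_apply]; ring
  have h2 := hbase.comp_sub_right (-μ)
  refine h2.congr (Eventually.of_forall fun z => ?_)
  show (z - -μ + (c - μ)) ^ 2 * phi (z - -μ) = (z + c) ^ 2 * phi (z + μ)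
  have h3 : z - -μ + (c - μ) = z + c := by ring
  have h4 : z - -μ = z + μ := by ring
  rw [h3, h4]

lemma integral_phi : ∫ z : ℝ, phi z = 1 := by
  simp_rw [phi_eq, integral_const_mul, integral_gaussian]
  rw [show Real.pi / (1/2) = 2 * Real.pi by ring]
  exact inv_mul_cancel₀ (ne_of_gt sqrt_two_pi_pos)

lemma integral_id_mul_phi : ∫ z : ℝ, z * phi z = 0 := by
  have h := integral_neg_eq_self (fun z : ℝ => z * phi z) volume
  have h2 : (fun z : ℝ => -z * phi (-z)) = fun z : ℝ => -(z * phi z) := by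
    funext z; rw [phi_neg_arg]; ring
  rw [h2, integral_neg] at h
  linarith

lemma integral_sq_mul_exp : ∫ z : ℝ, z ^ 2 * Real.exp (-(1/2) * z ^ 2)
    = Real.sqrt (2 * Real.pi) := by
  set F : ℝ → ℝ := fun x => -x * Real.exp (-(1/2) * x ^ 2) with hF
  set F' : ℝ → ℝ := fun x => (x ^ 2 - 1) * Real.exp (-(1/2) * x ^ 2) with hF'
  have hderiv : ∀ x : ℝ, HasDerivAt F (F' x) x := by
    intro x
    have hg : HasDerivAt (fun x : ℝ => -(1/2) * x ^ 2) (-(1/2) * (2 * x ^ 1)) x :=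
      (hasDerivAt_pow 2 x).const_mul _
    have hexp := hg.exp
    have hneg : HasDerivAt (fun x : ℝ => -x) (-1) x := (hasDerivAt_id x).neg
    have : HasDerivAt F _ x := hneg.mul hexp
    convert this using 1
    show (x ^ 2 - 1) * Real.exp (-(1/2) * x ^ 2) = _
    ring
  have hcont : Continuous F := by
    apply Continuous.mul
    · exact continuous_neg
    · exact Real.continuous_exp.comp (by continuity)
  have hT : Tendsto (fun x : ℝ => x * Real.exp (-(1/2) * x ^ 2)) atTop (𝓝 0) := by
    have h := rpow_mul_exp_neg_mul_sq_isLittleO_exp_neg (by norm_num : (0:ℝ) < 1/2) 1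
    simp_rw [Real.rpow_one] at h
    have hb : Tendsto (fun x : ℝ => Real.exp (-(1/2) * x)) atTop (𝓝 0) := by
      have h1 : Tendsto (fun x : ℝ => (1/2 : ℝ) * x) atTop atTop :=
        Tendsto.const_mul_atTop (by norm_num) tendsto_id
      have h2 : Tendsto (fun x : ℝ => -((1/2 : ℝ) * x)) atTop atBot :=
        tendsto_neg_atTop_atBot.comp h1
      have h3 := Real.tendsto_exp_atBot.comp h2
      refine h3.congr fun x => ?_
      simp [neg_mul]
    exact h.tendsto_zero_of_tendsto hb
  have hTop : Tendsto F atTop (𝓝 0) := by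
    have := hT.neg
    rw [neg_zero] at this
    refine this.congr fun x => ?_
    simp only [hF]
    ring
  have hBot : Tendsto F atBot (𝓝 0) := by
    have := hT.comp tendsto_neg_atBot_atTop
    refine this.congr fun x => ?_
    simp only [Function.comp, hF, neg_sq]
  have hint : Integrable F' := by
    have h := integrable_sq_mul_exp.sub
      ((integrable_exp_neg_mul_sq (by norm_num : (0:ℝ) < 1/2)))
    refine h.congr (Eventually.of_forall fun z => ?_)
    simp only [hF', Pi.sub_apply]; ring
  have hIoi : ∫ x in Ioi (0:ℝ), F' x = 0 - F 0 :=
    integral_Ioi_of_hasDerivAt_of_tendsto hcont.continuousWithinAt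
      (fun x _ => hderiv x) hint.integrableOn hTop
  have hIic : ∫ x in Iic (0:ℝ), F' x = F 0 - 0 :=
    integral_Iic_of_hasDerivAt_of_tendsto hcont.continuousWithinAt
      (fun x _ => hderiv x) hint.integrableOn hBot
  have hsplit := intervalIntegral.integral_Iic_add_Ioi (b := 0) hint.integrableOn hint.integrableOn
  have htot : ∫ x : ℝ, F' x = 0 := by
    rw [← hsplit, hIoi, hIic]; ring
  have hexp : ∫ x : ℝ, Real.exp (-(1/2) * x ^ 2) = Real.sqrt (2 * Real.pi) := by
    rw [integral_gaussian, show Real.pi / (1/2) = 2 * Real.pi by ring]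
  have hsub : ∫ x : ℝ, F' x
      = (∫ x : ℝ, x ^ 2 * Real.exp (-(1/2) * x ^ 2)) - ∫ x : ℝ, Real.exp (-(1/2) * x ^ 2) := by
    rw [← integral_sub integrable_sq_mul_exp
      (integrable_exp_neg_mul_sq (by norm_num : (0:ℝ) < 1/2))]
    congr 1
    funext x
    simp only [hF']
    ring
  rw [hsub, hexp] at htot
  linarith

lemma integral_sq_mul_phi : ∫ z : ℝ, z ^ 2 * phi z = 1 := by
  have h : (fun z : ℝ => z ^ 2 * phi z)
      = fun z : ℝ => (Real.sqrt (2 * Real.pi))⁻¹ * (z ^ 2 * Real.exp (-(1/2) * z ^ 2)) := by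
    funext z; rw [phi_eq]; ring
  rw [h, integral_const_mul, integral_sq_mul_exp]
  exact inv_mul_cancel₀ (ne_of_gt sqrt_two_pi_pos)

/-- second moment of shifted gaussian -/
lemma integral_poly_phi (c μ : ℝ) :
    ∫ z : ℝ, (z + c) ^ 2 * phi (z + μ) = 1 + (c - μ) ^ 2 := by
  set d := c - μ with hd
  have hshift : (fun z : ℝ => (z + c) ^ 2 * phi (z + μ))
      = fun z : ℝ => (fun u : ℝ => (u + d) ^ 2 * phi u) (z - -μ) := by
    funext z
    show (z + c) ^ 2 * phi (z + μ) = (z - -μ + d) ^ 2 * phi (z - -μ)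
    have h3 : z - -μ + d = z + c := by rw [hd]; ring
    have h4 : z - -μ = z + μ := by ring
    rw [← h3, h4]
  rw [hshift, integral_sub_right_eq_self (fun u : ℝ => (u + d) ^ 2 * phi u) (-μ)]
  have hexpand : (fun u : ℝ => (u + d) ^ 2 * phi u)
      = fun u : ℝ => (u ^ 2 * phi u + (2 * d) * (u * phi u)) + d ^ 2 * phi u := by
    funext u; ring
  have hA : Integrable (fun u : ℝ => u ^ 2 * phi u + 2 * d * (u * phi u)) := by
    exact integrable_sq_mul_phi.add (integrable_id_mul_phi.const_mul _)
  have hB : Integrable (fun u : ℝ => d ^ 2 * phi u) := integrable_phi.const_mul _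
  rw [hexpand, integral_add hA hB,
    integral_add integrable_sq_mul_phi (integrable_id_mul_phi.const_mul _),
    integral_const_mul, integral_const_mul, integral_phi, integral_sq_mul_phi,
    integral_id_mul_phi]
  ring

lemma integrable_phi_shift (μ : ℝ) : Integrable fun x : ℝ => phi (x + μ) := by
  have := integrable_phi.comp_sub_right (-μ)
  refine this.congr (Eventually.of_forall fun x => ?_)
  simp only [sub_neg_eq_add]

lemma integral_phi_Iic_shift (μ : ℝ) : ∫ x in Iic (0:ℝ), phi (x + μ) = Phi μ := by
  have h1 : Phi μ = ∫ x : ℝ, (Iic μ).indicator phi x := by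
    rw [integral_indicator measurableSet_Iic]; rfl
  have h2 := integral_sub_right_eq_self (μ := volume) ((Iic μ).indicator phi) (-μ)
  have h3 : (fun x : ℝ => (Iic μ).indicator phi (x - -μ))
      = fun x : ℝ => (Iic (0:ℝ)).indicator (fun x => phi (x + μ)) x := by
    funext x
    simp only [indicator_apply, mem_Iic, sub_neg_eq_add, add_le_iff_nonpos_left]
  rw [h1, ← h2, h3, integral_indicator measurableSet_Iic]

lemma integral_phi_total_shift (μ : ℝ) : ∫ x : ℝ, phi (x + μ) = 1 := by
  have h2 := integral_sub_right_eq_self (μ := volume) phi (-μ)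
  simp_rw [sub_neg_eq_add] at h2
  rw [h2, integral_phi]

lemma integral_phi_Ioi_shift (μ : ℝ) : ∫ x in Ioi (0:ℝ), phi (x + μ) = 1 - Phi μ := by
  have hsplit := intervalIntegral.integral_Iic_add_Ioi (b := 0) (integrable_phi_shift μ).integrableOn
    (integrable_phi_shift μ).integrableOn
  rw [integral_phi_total_shift, integral_phi_Iic_shift] at hsplit
  linarith

lemma integral_phi_Iio_shift (μ : ℝ) : ∫ x in Iio (0:ℝ), phi (x + μ) = Phi μ := by
  rw [← integral_Iic_eq_integral_Iio, integral_phi_Iic_shift]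

lemma Phi_neg (μ : ℝ) : Phi (-μ) = 1 - Phi μ := by
  have h1 : Phi (-μ) = ∫ x : ℝ, (Iic (-μ)).indicator phi x := by
    rw [integral_indicator measurableSet_Iic]; rfl
  have h2 := integral_neg_eq_self ((Iic (-μ)).indicator phi) volume
  have h3 : (fun x : ℝ => (Iic (-μ)).indicator phi (-x))
      = fun x : ℝ => (Ici μ).indicator phi x := by
    funext x
    simp only [indicator_apply, mem_Iic, mem_Ici, neg_le_neg_iff, phi_neg_arg]
  rw [h1, ← h2, h3, integral_indicator measurableSet_Ici, integral_Ici_eq_integral_Ioi]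
  have hsplit := intervalIntegral.integral_Iic_add_Ioi (b := μ) integrable_phi.integrableOn
    integrable_phi.integrableOn
  rw [integral_phi] at hsplit
  have : Phi μ = ∫ x in Iic μ, phi x := rfl
  linarith

/-- **Expected two-cluster cross-validation error for a planar Gaussian mixture.**
For all real `μX, μY, a`,
`∫∫ [(y − a)² 1{x > 0} + (y + a)² 1{x < 0}] f(x,y) dx dy
  = 1 + μY² + a(a + 2μY − 4μY Φ(μX))`. -/
theorem two_cluster_cv_error (μX μY a : ℝ) :
    (∫ p : ℝ × ℝ,
        ((if 0 < p.1 then (p.2 - a) ^ 2 else 0)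
          + (if p.1 < 0 then (p.2 + a) ^ 2 else 0)) * fmix2 μX μY p)
      = 1 + μY ^ 2 + a * (a + 2 * μY - 4 * μY * Phi μX) := by
  classical
  set f1 : ℝ → ℝ := (Ioi (0:ℝ)).indicator fun x => (1/2) * phi (x + -μX) with hf1
  set f2 : ℝ → ℝ := (Ioi (0:ℝ)).indicator fun x => (1/2) * phi (x + μX) with hf2
  set f3 : ℝ → ℝ := (Iio (0:ℝ)).indicator fun x => (1/2) * phi (x + -μX) with hf3
  set f4 : ℝ → ℝ := (Iio (0:ℝ)).indicator fun x => (1/2) * phi (x + μX) with hf4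
  set g1 : ℝ → ℝ := fun y => (y + -a) ^ 2 * phi (y + -μY) with hg1
  set g2 : ℝ → ℝ := fun y => (y + -a) ^ 2 * phi (y + μY) with hg2
  set g3 : ℝ → ℝ := fun y => (y + a) ^ 2 * phi (y + -μY) with hg3
  set g4 : ℝ → ℝ := fun y => (y + a) ^ 2 * phi (y + μY) with hg4
  have hpt : (fun p : ℝ × ℝ =>
      ((if 0 < p.1 then (p.2 - a) ^ 2 else 0)
        + (if p.1 < 0 then (p.2 + a) ^ 2 else 0)) * fmix2 μX μY p)
      = fun p : ℝ × ℝ => (f1 p.1 * g1 p.2 + f2 p.1 * g2 p.2)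
          + (f3 p.1 * g3 p.2 + f4 p.1 * g4 p.2) := by
    funext p
    simp only [hf1, hf2, hf3, hf4, hg1, hg2, hg3, hg4, indicator_apply, mem_Ioi, mem_Iio, fmix2]
    have e1 : p.1 - μX = p.1 + -μX := by ring
    have e2 : p.2 - μY = p.2 + -μY := by ring
    have e3 : p.2 - a = p.2 + -a := by ring
    rw [e1, e2, e3]
    by_cases h1 : 0 < p.1 <;> by_cases h2 : p.1 < 0 <;> simp [h1, h2] <;> ring
  have hintf1 : Integrable f1 :=
    ((integrable_phi_shift (-μX)).const_mul _).indicator measurableSet_Ioi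
  have hintf2 : Integrable f2 :=
    ((integrable_phi_shift μX).const_mul _).indicator measurableSet_Ioi
  have hintf3 : Integrable f3 :=
    ((integrable_phi_shift (-μX)).const_mul _).indicator measurableSet_Iio
  have hintf4 : Integrable f4 :=
    ((integrable_phi_shift μX).const_mul _).indicator measurableSet_Iio
  have hintg1 : Integrable g1 := integrable_poly_phi (-a) (-μY)
  have hintg2 : Integrable g2 := integrable_poly_phi (-a) μY
  have hintg3 : Integrable g3 := integrable_poly_phi a (-μY)
  have hintg4 : Integrable g4 := integrable_poly_phi a μY
  rw [hpt]
  rw [MeasureTheory.Measure.volume_eq_prod]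
  have hi1 : Integrable (fun z : ℝ × ℝ => f1 z.1 * g1 z.2) (volume.prod volume) :=
    hintf1.mul_prod hintg1
  have hi2 : Integrable (fun z : ℝ × ℝ => f2 z.1 * g2 z.2) (volume.prod volume) :=
    hintf2.mul_prod hintg2
  have hi3 : Integrable (fun z : ℝ × ℝ => f3 z.1 * g3 z.2) (volume.prod volume) :=
    hintf3.mul_prod hintg3
  have hi4 : Integrable (fun z : ℝ × ℝ => f4 z.1 * g4 z.2) (volume.prod volume) :=
    hintf4.mul_prod hintg4
  have hi12 : Integrable (fun z : ℝ × ℝ => f1 z.1 * g1 z.2 + f2 z.1 * g2 z.2)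
      (volume.prod volume) := by exact hi1.add hi2
  have hi34 : Integrable (fun z : ℝ × ℝ => f3 z.1 * g3 z.2 + f4 z.1 * g4 z.2)
      (volume.prod volume) := by exact hi3.add hi4
  rw [integral_add hi12 hi34, integral_add hi1 hi2, integral_add hi3 hi4,
    integral_prod_mul, integral_prod_mul, integral_prod_mul, integral_prod_mul]
  -- compute the x-integrals
  have hxf1 : ∫ x : ℝ, f1 x = (1/2) * Phi μX := by
    rw [hf1, integral_indicator measurableSet_Ioi, integral_const_mul,
      integral_phi_Ioi_shift, Phi_neg]
    ring
  have hxf2 : ∫ x : ℝ, f2 x = (1/2) * (1 - Phi μX) := by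
    rw [hf2, integral_indicator measurableSet_Ioi, integral_const_mul, integral_phi_Ioi_shift]
  have hxf3 : ∫ x : ℝ, f3 x = (1/2) * (1 - Phi μX) := by
    rw [hf3, integral_indicator measurableSet_Iio, integral_const_mul, integral_phi_Iio_shift,
      Phi_neg]
  have hxf4 : ∫ x : ℝ, f4 x = (1/2) * Phi μX := by
    rw [hf4, integral_indicator measurableSet_Iio, integral_const_mul, integral_phi_Iio_shift]
  have hyg1 : ∫ y : ℝ, g1 y = 1 + (μY - a) ^ 2 := by
    rw [hg1, integral_poly_phi]; ring_nf
  have hyg2 : ∫ y : ℝ, g2 y = 1 + (μY + a) ^ 2 := by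
    rw [hg2, integral_poly_phi]; ring_nf
  have hyg3 : ∫ y : ℝ, g3 y = 1 + (μY + a) ^ 2 := by
    rw [hg3, integral_poly_phi]; ring_nf
  have hyg4 : ∫ y : ℝ, g4 y = 1 + (μY - a) ^ 2 := by
    rw [hg4, integral_poly_phi]; ring_nf
  rw [hxf1, hxf2, hxf3, hxf4, hyg1, hyg2, hyg3, hyg4]
  ring
end
end
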